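/- Let L be a real-linear functional on the real vector space of N×N Hermitian matrices. Then L vanishes on every element of I_Sym if and only if L vanishes on every element of V_Sym. -/
import Mathlib


open Matrix

/-- The permutation matrix `P_π` on the `m`-fold tensor power of `ℂ^n`, indexing
coordinates by functions `f : Fin m → Fin n`, with entries
`(P_π)_{f,g} = 1` if `g = f ∘ π⁻¹` and `0` otherwise. -/
def permMat (n m : ℕ) (π : Equiv.Perm (Fin m)) :
    Matrix (Fin m → Fin n) (Fin m → Fin n) ℂ :=
  Matrix.of fun f g => if g = f ∘ π.symm then 1 else 0

/-- The symmetriser `Π_Sym = (1/m!) Σ_π P_π`. -/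
noncomputable def symmetriser (n m : ℕ) :
    Matrix (Fin m → Fin n) (Fin m → Fin n) ℂ :=
  (m.factorial : ℂ)⁻¹ • ∑ π : Equiv.Perm (Fin m), permMat n m π

/-- The symmetrically permuted matrix `S_{l,r}(G) = (1/2)(P_l† G P_r + P_r† G P_l)`. -/
noncomputable def symPerm (n m : ℕ) (πl πr : Equiv.Perm (Fin m))
    (G : Matrix (Fin m → Fin n) (Fin m → Fin n) ℂ) :
    Matrix (Fin m → Fin n) (Fin m → Fin n) ℂ :=
  (2 : ℂ)⁻¹ •
    ((permMat n m πl)ᴴ * G * permMat n m πr + (permMat n m πr)ᴴ * G * permMat n m πl)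

/-- `I_Sym`: the set of matrices of the form `G - S_{l,r}(G)` with `G` Hermitian. -/
def ISym (n m : ℕ) : Set (Matrix (Fin m → Fin n) (Fin m → Fin n) ℂ) :=
  {A | ∃ (G : Matrix (Fin m → Fin n) (Fin m → Fin n) ℂ) (πl πr : Equiv.Perm (Fin m)),
      G.IsHermitian ∧ A = G - symPerm n m πl πr G}

/-- `V_Sym`: the set of matrices of the form `G - Π_Sym G Π_Sym` with `G` Hermitian. -/
def VSym (n m : ℕ) : Set (Matrix (Fin m → Fin n) (Fin m → Fin n) ℂ) :=
  {A | ∃ G : Matrix (Fin m → Fin n) (Fin m → Fin n) ℂ,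
      G.IsHermitian ∧ A = G - symmetriser n m * G * symmetriser n m}

lemma permMat_mul (n m : ℕ) (π σ : Equiv.Perm (Fin m)) :
    permMat n m π * permMat n m σ = permMat n m (σ * π) := by
  ext f h
  simp only [permMat, Matrix.mul_apply, Matrix.of_apply, ite_mul, one_mul, zero_mul,
    Finset.sum_ite_eq', Finset.mem_univ, if_true]
  rfl

lemma permMat_ct (n m : ℕ) (π : Equiv.Perm (Fin m)) :
    (permMat n m π)ᴴ = permMat n m π⁻¹ := by
  ext f g
  simp only [permMat, conjTranspose_apply, Matrix.of_apply]
  have key : f = g ∘ ⇑π.symm ↔ g = f ∘ ⇑(π⁻¹).symm := by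
    rw [Equiv.Perm.inv_def, Equiv.symm_symm]
    constructor <;> intro h <;> subst h <;> ext x <;> simp
  split_ifs with h1 h2 h2
  · exact star_one ℂ
  · exact absurd (key.mp h1) h2
  · exact absurd (key.mpr h2) h1
  · exact star_zero ℂ

lemma symmetriser_mul_permMat (n m : ℕ) (σ : Equiv.Perm (Fin m)) :
    symmetriser n m * permMat n m σ = symmetriser n m := by
  unfold symmetriser
  rw [smul_mul_assoc, Finset.sum_mul]
  congr 1
  simp only [permMat_mul]
  exact Fintype.sum_equiv (Equiv.mulLeft σ) _ _ (fun π => rfl)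

lemma permMat_mul_symmetriser (n m : ℕ) (σ : Equiv.Perm (Fin m)) :
    permMat n m σ * symmetriser n m = symmetriser n m := by
  unfold symmetriser
  rw [mul_smul_comm, Finset.mul_sum]
  congr 1
  simp only [permMat_mul]
  exact Fintype.sum_equiv (Equiv.mulRight σ) _ _ (fun π => rfl)

lemma symmetriser_ct (n m : ℕ) : (symmetriser n m)ᴴ = symmetriser n m := by
  unfold symmetriser
  rw [conjTranspose_smul, conjTranspose_sum]
  simp only [permMat_ct]
  congr 1
  · simp
  · exact Fintype.sum_equiv (Equiv.inv _) _ _ (fun π => rfl)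

lemma sandwich (n m : ℕ) (πl πr : Equiv.Perm (Fin m))
    (G : Matrix (Fin m → Fin n) (Fin m → Fin n) ℂ) :
    symmetriser n m * symPerm n m πl πr G * symmetriser n m
      = symmetriser n m * G * symmetriser n m := by
  have e : ∀ a b : Equiv.Perm (Fin m),
      symmetriser n m * (permMat n m a * G * permMat n m b) * symmetriser n m
        = symmetriser n m * G * symmetriser n m := by
    intro a b
    calc symmetriser n m * (permMat n m a * G * permMat n m b) * symmetriser n m
        = (symmetriser n m * permMat n m a) * G * (permMat n m b * symmetriser n m) := by
          simp only [mul_assoc]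
      _ = symmetriser n m * G * symmetriser n m := by
          rw [symmetriser_mul_permMat, permMat_mul_symmetriser]
  unfold symPerm
  rw [permMat_ct, permMat_ct, Matrix.mul_smul, Matrix.smul_mul, mul_add, add_mul, e, e,
    ← two_smul ℂ, smul_smul]
  norm_num

lemma symPerm_isHermitian (n m : ℕ) (πl πr : Equiv.Perm (Fin m))
    {G : Matrix (Fin m → Fin n) (Fin m → Fin n) ℂ} (h : G.IsHermitian) :
    (symPerm n m πl πr G).IsHermitian := by
  unfold Matrix.IsHermitian symPerm
  rw [conjTranspose_smul, conjTranspose_add]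
  simp only [conjTranspose_mul, conjTranspose_conjTranspose, h.eq]
  rw [add_comm]
  congr 1
  · simp
  · simp [mul_assoc]

lemma sandwich_isHermitian (n m : ℕ)
    {G : Matrix (Fin m → Fin n) (Fin m → Fin n) ℂ} (h : G.IsHermitian) :
    (symmetriser n m * G * symmetriser n m).IsHermitian := by
  unfold Matrix.IsHermitian
  simp only [conjTranspose_mul, symmetriser_ct, h.eq, mul_assoc]

lemma sum_symPerm (n m : ℕ) (G : Matrix (Fin m → Fin n) (Fin m → Fin n) ℂ) :
    ∑ p : Equiv.Perm (Fin m) × Equiv.Perm (Fin m), symPerm n m p.1⁻¹ p.2 G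
      = ((m.factorial : ℂ) ^ 2) • (symmetriser n m * G * symmetriser n m) := by
  have lhs : ∑ p : Equiv.Perm (Fin m) × Equiv.Perm (Fin m), symPerm n m p.1⁻¹ p.2 G
      = ∑ p : Equiv.Perm (Fin m) × Equiv.Perm (Fin m),
          permMat n m p.1 * G * permMat n m p.2 := by
    unfold symPerm
    simp only [permMat_ct, inv_inv]
    rw [← Finset.smul_sum, Finset.sum_add_distrib]
    have h2 : ∑ p : Equiv.Perm (Fin m) × Equiv.Perm (Fin m),
        permMat n m p.2⁻¹ * G * permMat n m p.1⁻¹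
        = ∑ p : Equiv.Perm (Fin m) × Equiv.Perm (Fin m),
            permMat n m p.1 * G * permMat n m p.2 := by
      have hb : Function.Bijective
          (fun p : Equiv.Perm (Fin m) × Equiv.Perm (Fin m) => (p.2⁻¹, p.1⁻¹)) :=
        Function.Involutive.bijective (fun p => by simp)
      exact Fintype.sum_bijective _ hb _ _ (fun p => rfl)
    rw [h2, ← two_smul ℂ, smul_smul]
    norm_num
  rw [lhs]
  unfold symmetriser
  simp only [Matrix.smul_mul, Matrix.mul_smul, smul_smul]
  have hf : (m.factorial : ℂ) ≠ 0 := Nat.cast_ne_zero.mpr m.factorial_ne_zero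
  have h1 : (m.factorial : ℂ) ^ 2 * ((m.factorial : ℂ)⁻¹ * (m.factorial : ℂ)⁻¹) = 1 := by
    field_simp
  rw [h1, one_smul, Fintype.sum_prod_type, Finset.sum_mul]
  simp only [Finset.sum_mul]
  rw [Finset.sum_comm]
  simp only [Finset.mul_sum]
  exact Finset.sum_comm

lemma mem_selfAdjoint_of_isHermitian {n m : ℕ}
    {G : Matrix (Fin m → Fin n) (Fin m → Fin n) ℂ} (h : G.IsHermitian) :
    G ∈ selfAdjoint (Matrix (Fin m → Fin n) (Fin m → Fin n) ℂ) := by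
  rw [selfAdjoint.mem_iff, Matrix.star_eq_conjTranspose]
  exact h

lemma real_smul_mat {n m : ℕ} (r : ℝ) (X : Matrix (Fin m → Fin n) (Fin m → Fin n) ℂ) :
    r • X = (r : ℂ) • X := by
  ext i j
  simp [Matrix.smul_apply, Complex.real_smul]

/-- A real-linear functional on the real vector space of Hermitian matrices vanishes on
every element of `I_Sym` iff it vanishes on every element of `V_Sym`. -/
theorem vanishes_on_ISym_iff_vanishes_on_VSym (n m : ℕ) (hn : 1 ≤ n) (hm : 1 ≤ m)
    (L : selfAdjoint (Matrix (Fin m → Fin n) (Fin m → Fin n) ℂ) →ₗ[ℝ] ℝ) :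
    (∀ A : selfAdjoint (Matrix (Fin m → Fin n) (Fin m → Fin n) ℂ),
        (A : Matrix (Fin m → Fin n) (Fin m → Fin n) ℂ) ∈ ISym n m → L A = 0) ↔
      (∀ A : selfAdjoint (Matrix (Fin m → Fin n) (Fin m → Fin n) ℂ),
        (A : Matrix (Fin m → Fin n) (Fin m → Fin n) ℂ) ∈ VSym n m → L A = 0) := by
  constructor
  · intro hI A hA
    obtain ⟨G, hG, hAe⟩ := hA
    let B : (Equiv.Perm (Fin m) × Equiv.Perm (Fin m)) →
        selfAdjoint (Matrix (Fin m → Fin n) (Fin m → Fin n) ℂ) :=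
      fun p => ⟨G - symPerm n m p.1⁻¹ p.2 G,
        mem_selfAdjoint_of_isHermitian (hG.sub (symPerm_isHermitian n m _ _ hG))⟩
    have hA2 : A = ((m.factorial : ℝ) ^ 2)⁻¹ • ∑ p, B p := by
      apply Subtype.ext
      rw [selfAdjoint.val_smul, AddSubmonoidClass.coe_finset_sum]
      simp only [B]
      rw [Finset.sum_sub_distrib, sum_symPerm, real_smul_mat, hAe]
      have hcard : (Finset.univ : Finset (Equiv.Perm (Fin m) × Equiv.Perm (Fin m))).card
          = m.factorial ^ 2 := by
        simp [Fintype.card_perm, sq]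
      rw [Finset.sum_const, hcard]
      have hf : (m.factorial : ℂ) ≠ 0 := Nat.cast_ne_zero.mpr m.factorial_ne_zero
      push_cast
      rw [smul_sub, ← Nat.cast_smul_eq_nsmul ℂ, smul_smul, smul_smul]
      push_cast
      rw [inv_mul_cancel₀ (pow_ne_zero 2 hf), one_smul, one_smul]
    rw [hA2, _root_.map_smul, map_sum]
    have hz : ∀ p : Equiv.Perm (Fin m) × Equiv.Perm (Fin m), L (B p) = 0 :=
      fun p => hI (B p) ⟨G, p.1⁻¹, p.2, hG, rfl⟩
    simp [hz]
  · intro hV A hA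
    obtain ⟨G, πl, πr, hG, hAe⟩ := hA
    have hS := symPerm_isHermitian n m πl πr hG
    let B : selfAdjoint (Matrix (Fin m → Fin n) (Fin m → Fin n) ℂ) :=
      ⟨G - symmetriser n m * G * symmetriser n m,
        mem_selfAdjoint_of_isHermitian (hG.sub (sandwich_isHermitian n m hG))⟩
    let C : selfAdjoint (Matrix (Fin m → Fin n) (Fin m → Fin n) ℂ) :=
      ⟨symPerm n m πl πr G -
          symmetriser n m * symPerm n m πl πr G * symmetriser n m,
        mem_selfAdjoint_of_isHermitian (hS.sub (sandwich_isHermitian n m hS))⟩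
    have hABC : A = B - C := by
      apply Subtype.ext
      rw [AddSubgroup.coe_sub]
      simp only [B, C]
      rw [hAe, sandwich]
      abel
    rw [hABC, map_sub, hV B ⟨G, hG, rfl⟩, hV C ⟨symPerm n m πl πr G, hS, rfl⟩, sub_zero]
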